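/- Let P be a C¹ function near w₀ ∈ ℝ^d with values in the N×N complex matrices, let ν ∈ ℝ^d, let M be an N×N complex matrix, and let c > 0, C ≥ 0 be constants such that for all u ∈ ℂ^N: Re⟨M ∂_ν P(w₀)u, u⟩ ≥ c‖u‖² − C‖P(w₀)u‖² and Im⟨M P(w₀)u, u⟩ ≥ −C‖P(w₀)u‖². Then the map from Ker P(w₀) to ℂ^N / Ran P(w₀) sending u to the class of ∂_ν P(w₀)u is a bijection; in particular P is of principal type at w₀. -/

import Mathlib

open Matrix

/-- The directional derivative `∂_ν P(w₀)` of a matrix-valued function, taken entrywise. -/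
noncomputable def dirDeriv {d N : ℕ} (P : EuclideanSpace ℝ (Fin d) → Matrix (Fin N) (Fin N) ℂ)
    (w₀ ν : EuclideanSpace ℝ (Fin d)) : Matrix (Fin N) (Fin N) ℂ :=
  fun i j => deriv (fun t : ℝ => P (w₀ + t • ν) i j) 0

/-- `P` is of principal type at `w₀` if for some direction `ν` the map
`Ker P(w₀) ∋ u ↦ ∂_ν P(w₀) u ∈ ℂ^N / Ran P(w₀)` is a bijection. -/
noncomputable def IsPrincipalTypeAt {d N : ℕ}
    (P : EuclideanSpace ℝ (Fin d) → Matrix (Fin N) (Fin N) ℂ)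
    (w₀ : EuclideanSpace ℝ (Fin d)) : Prop :=
  ∃ ν : EuclideanSpace ℝ (Fin d),
    Function.Bijective
      ((LinearMap.range (Matrix.toEuclideanLin (P w₀))).mkQ ∘ₗ
        Matrix.toEuclideanLin (dirDeriv P w₀ ν) ∘ₗ
        (LinearMap.ker (Matrix.toEuclideanLin (P w₀))).subtype)

/-!
Since `dim Ker A = dim (V ⧸ Ran A)` for an endomorphism `A = P(w₀)` of a finite-dimensional
space, it suffices to show injectivity: `u ∈ Ker A` with `D u = A v` forces `u = 0`, where
`D = ∂_ν P(w₀)`. Testing the imaginary-part bound on `w = u + i s v` gives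
`s Re⟨M A v, u⟩ + O(s²) ≥ 0` for all real `s`, so `Re⟨M D u, u⟩ = Re⟨M A v, u⟩ = 0`, and then
the real-part bound yields `c‖u‖² ≤ 0`.
-/

section KerToCoker

variable {K V : Type*} [Field K] [AddCommGroup V] [Module K V]

def kerToCoker (A D : V →ₗ[K] V) : LinearMap.ker A →ₗ[K] V ⧸ LinearMap.range A :=
  (LinearMap.range A).mkQ ∘ₗ D ∘ₗ (LinearMap.ker A).subtype

theorem injective_kerToCoker_iff (A D : V →ₗ[K] V) :
    Function.Injective (kerToCoker A D) ↔
      ∀ u, A u = 0 → D u ∈ LinearMap.range A → u = 0 := by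
  rw [← LinearMap.ker_eq_bot, LinearMap.ker_eq_bot']
  constructor
  · intro h u hAu hDu
    exact congrArg Subtype.val (h ⟨u, hAu⟩ ((Submodule.Quotient.mk_eq_zero _).mpr hDu))
  · intro h u hu
    exact Subtype.ext (h u u.2 ((Submodule.Quotient.mk_eq_zero _).mp hu))

theorem finrank_ker_eq_finrank_quotient_range [FiniteDimensional K V] (A : V →ₗ[K] V) :
    Module.finrank K (LinearMap.ker A) = Module.finrank K (V ⧸ LinearMap.range A) := by
  have h₁ := Submodule.finrank_quotient_add_finrank (LinearMap.range A)
  have h₂ := LinearMap.finrank_range_add_finrank_ker A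
  omega

theorem bijective_kerToCoker_of_injective [FiniteDimensional K V] {A D : V →ₗ[K] V}
    (h : Function.Injective (kerToCoker A D)) : Function.Bijective (kerToCoker A D) :=
  ⟨h, (LinearMap.injective_iff_surjective_of_finrank_eq_finrank
    (finrank_ker_eq_finrank_quotient_range A)).mp h⟩

end KerToCoker

theorem eq_zero_of_forall_nonneg_mul_add_sq_mul {a b : ℝ} (h : ∀ s : ℝ, 0 ≤ s * a + s ^ 2 * b) :
    a = 0 := by
  have hdiscrim : discrim b a 0 ≤ 0 := discrim_le_zero fun s => by linarith [h s]
  rw [discrim] at hdiscrim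
  nlinarith [sq_nonneg a]

section QuasiSymmetrizable

variable {E : Type*} [NormedAddCommGroup E] [InnerProductSpace ℂ E]

theorem im_inner_add_I_smul_of_apply_eq_zero {A M : E →ₗ[ℂ] E} {u : E} (hu : A u = 0)
    (v : E) (s : ℝ) :
    (inner ℂ (u + ((s : ℂ) * Complex.I) • v) (M (A (u + ((s : ℂ) * Complex.I) • v)))).im =
      s * (inner ℂ u (M (A v))).re + s ^ 2 * (inner ℂ v (M (A v))).im := by
  simp only [map_add, map_smul, hu, zero_add, inner_add_left, inner_smul_left,
    inner_smul_right, map_mul, Complex.conj_ofReal, Complex.conj_I]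
  simp only [mul_neg, neg_mul, Complex.mul_im, Complex.mul_re, Complex.ofReal_re, Complex.I_re,
    mul_zero, Complex.ofReal_im, Complex.I_im, mul_one, sub_self, Complex.add_im, Complex.neg_im,
    zero_mul, add_zero, zero_add, Complex.add_re, Complex.neg_re, zero_sub, neg_neg]
  ring

theorem re_inner_eq_zero_of_apply_eq_zero {A M : E →ₗ[ℂ] E} {C : ℝ}
    (h : ∀ w, -(C * ‖A w‖ ^ 2) ≤ (inner ℂ w (M (A w))).im) {u : E} (hu : A u = 0) (v : E) :
    (inner ℂ u (M (A v))).re = 0 := by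
  refine eq_zero_of_forall_nonneg_mul_add_sq_mul (b := (inner ℂ v (M (A v))).im + C * ‖A v‖ ^ 2)
    fun s => ?_
  have hw := h (u + ((s : ℂ) * Complex.I) • v)
  have hAw : ‖A (u + ((s : ℂ) * Complex.I) • v)‖ ^ 2 = s ^ 2 * ‖A v‖ ^ 2 := by
    simp [hu, norm_smul, mul_pow]
  rw [im_inner_add_I_smul_of_apply_eq_zero hu, hAw] at hw
  linarith

theorem eq_zero_of_quasiSymmetrizable {A D M : E →ₗ[ℂ] E} {c C : ℝ} (hc : 0 < c)
    (h₁ : ∀ u, c * ‖u‖ ^ 2 - C * ‖A u‖ ^ 2 ≤ (inner ℂ u (M (D u))).re)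
    (h₂ : ∀ u, -(C * ‖A u‖ ^ 2) ≤ (inner ℂ u (M (A u))).im)
    {u : E} (hAu : A u = 0) (hDu : D u ∈ LinearMap.range A) : u = 0 := by
  obtain ⟨v, hv⟩ := hDu
  have hre := re_inner_eq_zero_of_apply_eq_zero h₂ hAu v
  have hcu := h₁ u
  rw [hAu, ← hv, hre, norm_zero] at hcu
  have : ‖u‖ ^ 2 ≤ 0 := by nlinarith
  simpa using this

end QuasiSymmetrizable

theorem quasiSymmetrizable_principalType_general {d N : ℕ}
    (P : EuclideanSpace ℝ (Fin d) → Matrix (Fin N) (Fin N) ℂ)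
    (w₀ ν : EuclideanSpace ℝ (Fin d)) (M : Matrix (Fin N) (Fin N) ℂ)
    (c C : ℝ) (hc : 0 < c)
    (h1 : ∀ u : EuclideanSpace ℂ (Fin N),
      c * ‖u‖ ^ 2 - C * ‖Matrix.toEuclideanLin (P w₀) u‖ ^ 2 ≤
        (inner ℂ u (Matrix.toEuclideanLin (M * dirDeriv P w₀ ν) u) : ℂ).re)
    (h2 : ∀ u : EuclideanSpace ℂ (Fin N),
      -(C * ‖Matrix.toEuclideanLin (P w₀) u‖ ^ 2) ≤
        (inner ℂ u (Matrix.toEuclideanLin (M * P w₀) u) : ℂ).im) :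
    Function.Bijective
      ((LinearMap.range (Matrix.toEuclideanLin (P w₀))).mkQ ∘ₗ
        Matrix.toEuclideanLin (dirDeriv P w₀ ν) ∘ₗ
        (LinearMap.ker (Matrix.toEuclideanLin (P w₀))).subtype) ∧
    IsPrincipalTypeAt P w₀ := by
  simp only [Matrix.toLpLin_mul_same, LinearMap.comp_apply] at h1 h2
  have hinj := (injective_kerToCoker_iff _ _).mpr fun u hAu hDu =>
    eq_zero_of_quasiSymmetrizable hc h1 h2 hAu hDu
  have hbij := bijective_kerToCoker_of_injective hinj
  exact ⟨hbij, ν, hbij⟩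

/-- **(Part of Proposition 4.7.)** If `P` is `C¹` near `w₀` and there are a matrix `M` and
constants `c > 0`, `C ≥ 0` with `Re⟨M ∂_ν P(w₀)u, u⟩ ≥ c‖u‖² − C‖P(w₀)u‖²` and
`Im⟨M P(w₀)u, u⟩ ≥ −C‖P(w₀)u‖²` for all `u ∈ ℂ^N`, then the map
`Ker P(w₀) ∋ u ↦ ∂_ν P(w₀) u ∈ ℂ^N / Ran P(w₀)` is a bijection; in particular `P` is of
principal type at `w₀`. Here `⟨a, b⟩ = ⟪b, a⟫_ℂ` is linear in the first argument. -/
theorem quasiSymmetrizable_principalType {d N : ℕ}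
    (P : EuclideanSpace ℝ (Fin d) → Matrix (Fin N) (Fin N) ℂ)
    (w₀ ν : EuclideanSpace ℝ (Fin d)) (M : Matrix (Fin N) (Fin N) ℂ)
    (hP : ∀ i j, ContDiffAt ℝ 1 (fun w => P w i j) w₀)
    (c C : ℝ) (hc : 0 < c) (hC : 0 ≤ C)
    (h1 : ∀ u : EuclideanSpace ℂ (Fin N),
      c * ‖u‖ ^ 2 - C * ‖Matrix.toEuclideanLin (P w₀) u‖ ^ 2 ≤
        (inner ℂ u (Matrix.toEuclideanLin (M * dirDeriv P w₀ ν) u) : ℂ).re)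
    (h2 : ∀ u : EuclideanSpace ℂ (Fin N),
      -(C * ‖Matrix.toEuclideanLin (P w₀) u‖ ^ 2) ≤
        (inner ℂ u (Matrix.toEuclideanLin (M * P w₀) u) : ℂ).im) :
    Function.Bijective
      ((LinearMap.range (Matrix.toEuclideanLin (P w₀))).mkQ ∘ₗ
        Matrix.toEuclideanLin (dirDeriv P w₀ ν) ∘ₗ
        (LinearMap.ker (Matrix.toEuclideanLin (P w₀))).subtype) ∧
    IsPrincipalTypeAt P w₀ :=
  quasiSymmetrizable_principalType_general P w₀ ν M c C hc h1 h2
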